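/- Let t, M, n be positive natural numbers, let ε and γ be real numbers with ε > 0 and 0 < γ < 1. Let X be a real t×M matrix all of whose entries are nonzero, for each (τ,μ) let a^{τ,μ} ∈ ℝⁿ be a vector all of whose components are nonzero, and let v ∈ ℝⁿ be nonzero. Define W ∈ ℝⁿ by W_k = Σ_{τ,μ} X_{τμ}·a^{τ,μ}_k/‖a^{τ,μ}‖, and let Z be a random variable taking the value v_k·(‖a^{τ,μ}‖/a^{τ,μ}_k)·(‖X‖_F²/X_{τμ}) with probability (X_{τμ}²/‖X‖_F²)·((a^{τ,μ}_k)²/‖a^{τ,μ}‖²). Set ε' = ε·max{1, |⟨W,v⟩|}/(√(tM)·‖v‖·‖X‖_F), let n₀ be a natural number with n₀ ≥ 4/ε'², and let Q be an odd natural number with Q ≥ 8·ln(1/γ). If S is the median of Q independent averages, each of n₀ independent copies of Z, then ℙ(|S − ⟨W,v⟩| ≤ ε·max{1, |⟨W,v⟩|}) ≥ 1 − γ. -/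

import Mathlib

/-!
Each sample `Z` is an unbiased estimator of `⟪W, v⟫` whose second moment is
`t M ‖v‖² ‖X‖_F²`: the importance weights `‖a‖ / a_k` and `‖X‖_F² / X_{τμ}` cancel the `ℓ₂`
sampling probabilities. By Chebyshev's inequality, the choice `n₀ ≥ 4 / ε'²` makes each of the
`Q` averages miss `⟪W, v⟫` by more than `ε · max 1 |⟪W, v⟫|` with probability at most `1/4`.
The averages are independent, so by Hoeffding's inequality at least half of them miss with
probability at most `exp (-Q/8) ≤ γ`; otherwise the median is within the tolerance, because at
least half of the values lie on each side of it.
-/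

open MeasureTheory ProbabilityTheory RealInnerProductSpace

/-- The median of a finite family of reals: the `(Q/2)`-th element (0-indexed) of
the sorted list, i.e. for odd `Q` the `((Q+1)/2)`-th smallest value. -/
noncomputable def median {Q : ℕ} (z : Fin Q → ℝ) : ℝ :=
  ((List.ofFn z).insertionSort (· ≤ ·)).getD (Q / 2) 0

open Finset
open scoped NNReal

theorem ProbabilityTheory.iIndepFun.curry {Ω ι κ : Type*} {mΩ : MeasurableSpace Ω}
    {P : Measure Ω} {𝓧 : ι → κ → Type*} {m𝓧 : ∀ i j, MeasurableSpace (𝓧 i j)}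
    {X : (i : ι) → (j : κ) → Ω → 𝓧 i j} (mX : ∀ i j, Measurable (X i j))
    (h : iIndepFun (fun p : ι × κ => X p.1 p.2) P) :
    iIndepFun (fun i ω j => X i j ω) P := by
  have := h.isProbabilityMeasure
  have (i : ι) (j : κ) : IsProbabilityMeasure (P.map (X i j)) :=
    Measure.isProbabilityMeasure_map (mX i j).aemeasurable
  have hσ : iIndepFun (fun (p : (_ : ι) × κ) => X p.1 p.2) P :=
    h.precomp (Equiv.sigmaEquivProd ι κ).injective
  have hrow (i : ι) : iIndepFun (X i) P :=
    h.precomp (g := Prod.mk i) (Prod.mk_right_injective i)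
  -- The joint law over pairs is a product measure, which `piCurry` regroups into one over rows.
  rw [iIndepFun_iff_map_fun_eq_infinitePi_map (by fun_prop)]
  have hcurry : (fun ω i j => X i j ω)
      = MeasurableEquiv.piCurry 𝓧 ∘ (fun ω (p : (_ : ι) × κ) => X p.1 p.2 ω) := rfl
  rw [hcurry, ← Measure.map_map (by fun_prop) (by fun_prop),
    hσ.map_fun_eq_infinitePi_map (fun p => mX _ _),
    Measure.infinitePi_map_piCurry (fun i j => P.map (X i j))]
  congr 1
  funext i
  exact ((hrow i).map_fun_eq_infinitePi_map (mX i)).symm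

namespace List

variable {α : Type*} [LinearOrder α] {l : List α}

theorem succ_le_countP_le_getElem (hl : l.Pairwise (· ≤ ·)) (i : ℕ)
    (hi : i < l.length) :
    i + 1 ≤ l.countP (fun x => decide (x ≤ l[i])) := by
  calc i + 1 = (l.take (i + 1)).countP (fun x => decide (x ≤ l[i])) := by
        rw [countP_eq_length.2, length_take]
        · omega
        intro x hx
        obtain ⟨j, hj, rfl⟩ := mem_iff_getElem.1 hx
        rw [length_take] at hj
        rw [getElem_take, decide_eq_true_eq]
        rcases (show j ≤ i by omega).eq_or_lt with rfl | hji
        · exact le_rfl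
        · exact hl.rel_get_of_lt (a := ⟨j, by omega⟩) (b := ⟨i, hi⟩) hji
    _ ≤ l.countP (fun x => decide (x ≤ l[i])) := (take_sublist _ _).countP_le

theorem length_sub_le_countP_getElem_le (hl : l.Pairwise (· ≤ ·)) (i : ℕ)
    (hi : i < l.length) :
    l.length - i ≤ l.countP (fun x => decide (l[i] ≤ x)) := by
  calc l.length - i = (l.drop i).countP (fun x => decide (l[i] ≤ x)) := by
        rw [countP_eq_length.2, length_drop]
        intro x hx
        obtain ⟨j, hj, rfl⟩ := mem_iff_getElem.1 hx
        rw [length_drop] at hj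
        rw [getElem_drop, decide_eq_true_eq]
        rcases (Nat.zero_le j).eq_or_lt with rfl | hj0
        · exact le_of_eq (by simp)
        · exact hl.rel_get_of_lt (a := ⟨i, hi⟩) (b := ⟨i + j, by omega⟩) (by simp; omega)
    _ ≤ l.countP (fun x => decide (l[i] ≤ x)) := (drop_sublist _ _).countP_le

theorem countP_ofFn_eq_card_filter {β : Type*} {Q : ℕ} (z : Fin Q → β) (p : β → Prop)
    [DecidablePred p] : (ofFn z).countP (fun x => decide (p x)) = #{q | p (z q)} := by
  rw [← Multiset.coe_countP, ← Fin.univ_val_map, Multiset.countP_map, Finset.card,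
    Finset.filter_val]

end List

section median

variable {Q : ℕ} (z : Fin Q → ℝ)

theorem median_eq_getElem (hQ : 0 < Q) :
    median z = ((List.ofFn z).insertionSort (· ≤ ·))[Q / 2]'(by simp; omega) :=
  List.getD_eq_getElem _ _ _

theorem card_le_median (hQ : 0 < Q) : Q / 2 + 1 ≤ #{q | z q ≤ median z} := by
  rw [← List.countP_ofFn_eq_card_filter z (· ≤ median z),
    ← (List.perm_insertionSort (· ≤ ·) _).countP_eq, median_eq_getElem z hQ]
  exact List.succ_le_countP_le_getElem (List.pairwise_insertionSort _ _) _ _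

theorem card_median_le (hQ : 0 < Q) : Q - Q / 2 ≤ #{q | median z ≤ z q} := by
  rw [← List.countP_ofFn_eq_card_filter z (median z ≤ ·),
    ← (List.perm_insertionSort (· ≤ ·) _).countP_eq, median_eq_getElem z hQ]
  simpa using List.length_sub_le_countP_getElem_le
    (List.pairwise_insertionSort (· ≤ ·) (List.ofFn z)) (Q / 2) (by simp; omega)

theorem abs_median_sub_le_of_two_mul_card_lt {c r : ℝ} (h : 2 * #{q | r < |z q - c|} < Q) :
    |median z - c| ≤ r := by
  have hQ : 0 < Q := by omega
  rw [abs_le]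
  constructor
  · by_contra! hlt
    have := (card_le_median z hQ).trans (card_le_card (t := {q | r < |z q - c|}) fun q hq => by
      simp only [mem_filter, mem_univ, true_and] at hq ⊢
      rw [abs_sub_comm, lt_abs]; left; linarith)
    omega
  · by_contra! hlt
    have := (card_median_le z hQ).trans (card_le_card (t := {q | r < |z q - c|}) fun q hq => by
      simp only [mem_filter, mem_univ, true_and] at hq ⊢
      rw [lt_abs]; left; linarith)
    omega

end median

theorem measureReal_sum_ge_le_of_mem_Icc {Ω ι : Type*} {mΩ : MeasurableSpace Ω}
    {P : Measure Ω} [IsProbabilityMeasure P] [Fintype ι] {B : ι → Ω → ℝ}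
    (hB : iIndepFun B P) (hmeas : ∀ i, Measurable (B i)) (hIcc : ∀ i ω, B i ω ∈ Set.Icc 0 1)
    {p t : ℝ} (hmean : ∀ i, P[B i] ≤ p) (ht : 0 ≤ t) :
    P.real {ω | Fintype.card ι * p + t ≤ ∑ i, B i ω}
      ≤ Real.exp (-2 * t ^ 2 / Fintype.card ι) := by
  have hcentered : iIndepFun (fun i ω => B i ω - P[B i]) P :=
    hB.comp (fun (i : ι) (y : ℝ) => y - ∫ ω, B i ω ∂P) fun i => measurable_id.sub_const _
  have hsubG (i : ι) : HasSubgaussianMGF (fun ω => B i ω - P[B i]) (1 / 4) P := by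
    convert hasSubgaussianMGF_of_mem_Icc (μ := P) (hmeas i).aemeasurable (ae_of_all _ (hIcc i))
    norm_num
  calc P.real {ω | Fintype.card ι * p + t ≤ ∑ i, B i ω}
      ≤ P.real {ω | t ≤ ∑ i, (B i ω - P[B i])} := by
        refine measureReal_mono (fun ω hω => ?_)
        simp only [Set.mem_ofPred_eq, sum_sub_distrib] at hω ⊢
        have : ∑ i, P[B i] ≤ Fintype.card ι * p := by
          simpa using sum_le_sum fun i (_ : i ∈ univ) => hmean i
        linarith
    _ ≤ Real.exp (-t ^ 2 / (2 * ((∑ _i : ι, (1 / 4 : ℝ≥0) : ℝ≥0) : ℝ))) :=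
        HasSubgaussianMGF.measure_sum_ge_le_of_iIndepFun hcentered (fun i _ => hsubG i) ht
    _ = Real.exp (-2 * t ^ 2 / Fintype.card ι) := by
        rw [sum_const, card_univ, nsmul_eq_mul]
        push_cast
        congr 1
        ring

theorem measureReal_card_le_two_mul_card_mem_le {Ω ι E : Type*} {mΩ : MeasurableSpace Ω}
    [MeasurableSpace E] {P : Measure Ω} [IsProbabilityMeasure P] [Fintype ι] {Y : ι → Ω → E}
    (hY : iIndepFun Y P) (hmeas : ∀ i, Measurable (Y i)) {S : Set E} [DecidablePred (· ∈ S)]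
    (hS : MeasurableSet S) (hp : ∀ i, P.real (Y i ⁻¹' S) ≤ 1 / 4) :
    P.real {ω | (Fintype.card ι : ℝ) ≤ 2 * #{i | Y i ω ∈ S}}
      ≤ Real.exp (-(Fintype.card ι / 8)) := by
  set N : ℝ := (Fintype.card ι : ℝ)
  set B : ι → Ω → ℝ := fun i => (Y i ⁻¹' S).indicator 1
  have hBindep : iIndepFun B P :=
    hY.comp (fun _ => S.indicator 1) fun _ => measurable_const.indicator hS
  have hBmeas (i : ι) : Measurable (B i) := measurable_const.indicator (hmeas i hS)
  have hBIcc (i : ι) (ω : Ω) : B i ω ∈ Set.Icc 0 1 := by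
    by_cases h : ω ∈ Y i ⁻¹' S <;> simp [B, h]
  have hBmean (i : ι) : P[B i] ≤ 1 / 4 := (integral_indicator_one (hmeas i hS)).trans_le (hp i)
  have hBsum (ω : Ω) : ∑ i, B i ω = #{i | Y i ω ∈ S} := by
    rw [natCast_card_filter]
    refine sum_congr rfl fun i _ => ?_
    by_cases h : Y i ω ∈ S <;> simp [B, h]
  calc P.real {ω | N ≤ 2 * #{i | Y i ω ∈ S}}
      = P.real {ω | N * (1 / 4) + N / 4 ≤ ∑ i, B i ω} := by
        congr 1 with ω
        simp only [Set.mem_ofPred_eq, hBsum]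
        constructor <;> intro h <;> linarith
    _ ≤ Real.exp (-2 * (N / 4) ^ 2 / N) :=
        measureReal_sum_ge_le_of_mem_Icc hBindep hBmeas hBIcc hBmean (by positivity)
    _ = Real.exp (-(N / 8)) := by
        rw [show -2 * (N / 4) ^ 2 / N = -(N * N / N / 8) by ring, mul_self_div_self]

theorem ofReal_one_sub_le_measure_abs_median_sub_le {Ω : Type*} {mΩ : MeasurableSpace Ω}
    {P : Measure Ω} [IsProbabilityMeasure P] {Q : ℕ} {Y : Fin Q → Ω → ℝ}
    (hY : iIndepFun Y P) (hmeas : ∀ q, Measurable (Y q)) {c r γ : ℝ}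
    (hbad : ∀ q, P.real {ω | r < |Y q ω - c|} ≤ 1 / 4) (hγ : 0 < γ)
    (hQ : 8 * Real.log (1 / γ) ≤ Q) :
    ENNReal.ofReal (1 - γ) ≤ P {ω | |median (fun q => Y q ω) - c| ≤ r} := by
  set bad := {ω | (Q : ℝ) ≤ 2 * #{q | r < |Y q ω - c|}}
  have hPbad : P.real bad ≤ γ := calc
    P.real bad ≤ Real.exp (-(Q / 8)) := by
        simpa using measureReal_card_le_two_mul_card_mem_le hY hmeas (S := {y | r < |y - c|})
          (measurableSet_lt measurable_const (by fun_prop)) hbad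
    _ ≤ Real.exp (Real.log γ) := by
        rw [one_div, Real.log_inv] at hQ
        exact Real.exp_le_exp.2 (by linarith)
    _ = γ := Real.exp_log hγ
  have hcover : Set.univ ⊆ {ω | |median (fun q => Y q ω) - c| ≤ r} ∪ bad := fun ω _ => by
    by_cases h : ω ∈ bad
    · exact Or.inr h
    · simp only [bad, Set.mem_ofPred_eq, not_le] at h
      exact Or.inl (abs_median_sub_le_of_two_mul_card_lt _ (by exact_mod_cast h))
  calc ENNReal.ofReal (1 - γ) = 1 - ENNReal.ofReal γ := by
        rw [ENNReal.ofReal_sub _ hγ.le, ENNReal.ofReal_one]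
    _ ≤ 1 - P bad := by
        gcongr
        rwa [ENNReal.le_ofReal_iff_toReal_le (measure_ne_top _ _) hγ.le]
    _ ≤ P {ω | |median (fun q => Y q ω) - c| ≤ r} := by
        rw [tsub_le_iff_right, ← measure_univ (μ := P)]
        exact (measure_mono hcover).trans (measure_union_le _ _)

theorem measure_le_abs_average_sub_le {Ω : Type*} {mΩ : MeasurableSpace Ω} {P : Measure Ω}
    [IsFiniteMeasure P] {n : ℕ} {Y : Fin n → Ω → ℝ} (hY : ∀ i, MemLp (Y i) 2 P)
    (hindep : Pairwise fun i j => IndepFun (Y i) (Y j) P) {c σ2 r : ℝ}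
    (hmean : ∀ i, P[Y i] = c) (hvar : ∀ i, variance (Y i) P ≤ σ2) (hn : 0 < n) (hr : 0 < r) :
    P {ω | r ≤ |(1 / n : ℝ) * ∑ i, Y i ω - c|} ≤ ENNReal.ofReal (σ2 / (n * r ^ 2)) := by
  have hn' : (0 : ℝ) < n := Nat.cast_pos.2 hn
  set A : Ω → ℝ := fun ω => (1 / n : ℝ) * ∑ i, Y i ω
  have hA : A = (1 / n : ℝ) • ∑ i, Y i := by ext ω; simp [A]
  have hAmem : MemLp A 2 P := hA ▸ (memLp_finsetSum' _ fun i _ => hY i).const_smul _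
  have hAmean : P[A] = c := by
    simp only [A, integral_const_mul,
      integral_finsetSum _ fun i _ => (hY i).integrable one_le_two, hmean, sum_const, card_univ,
      Fintype.card_fin, nsmul_eq_mul]
    field_simp
  have hAvar : variance A P ≤ σ2 / n := calc
    variance A P = (1 / n : ℝ) ^ 2 * ∑ i, variance (Y i) P := by
        rw [hA, variance_smul, IndepFun.variance_sum (fun i _ => hY i)
          fun i _ j _ hij => hindep hij]
    _ ≤ (1 / n : ℝ) ^ 2 * ∑ _i : Fin n, σ2 := by gcongr with i; exact hvar i
    _ = σ2 / n := by
        rw [sum_const, card_univ, Fintype.card_fin, nsmul_eq_mul]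
        field_simp
  calc P {ω | r ≤ |A ω - c|} ≤ ENNReal.ofReal (variance A P / r ^ 2) :=
        hAmean ▸ meas_ge_le_variance_div_sq hAmem hr
    _ ≤ ENNReal.ofReal (σ2 / (n * r ^ 2)) := by
        rw [← div_div]; gcongr

theorem integral_comp_eq_sum_of_measure_preimage_singleton {Ω E : Type*}
    {mΩ : MeasurableSpace Ω} [MeasurableSpace E] [MeasurableSingletonClass E] [Fintype E]
    {P : Measure Ω} [IsFiniteMeasure P] {g : Ω → E} (hg : Measurable g) {w : E → ℝ}
    (hw : ∀ x, 0 ≤ w x) (hlaw : ∀ x, P (g ⁻¹' {x}) = ENNReal.ofReal (w x)) (f : E → ℝ) :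
    ∫ ω, f (g ω) ∂P = ∑ x, w x * f x := by
  rw [← integral_map hg.aemeasurable Measurable.of_discrete.aestronglyMeasurable,
    integral_fintype .of_finite]
  refine sum_congr rfl fun x _ => ?_
  rw [measureReal_def, Measure.map_apply hg (measurableSet_singleton x), hlaw,
    ENNReal.toReal_ofReal (hw x), smul_eq_mul]

noncomputable section BST

variable {t M n : ℕ} (X : Matrix (Fin t) (Fin M) ℝ)
  (a : Fin t → Fin M → EuclideanSpace ℝ (Fin n)) (XF : ℝ) (v : EuclideanSpace ℝ (Fin n))

/-- The `ℓ₂`-BST sampling distribution: `(τ, μ)` with probability `X τ μ ^ 2 / XF ^ 2`, then `k`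
with probability `a τ μ k ^ 2 / ‖a τ μ‖ ^ 2`; `XF` stands for `‖X‖_F`. -/
def bstWeight : Fin t × Fin M × Fin n → ℝ
  | (τ, μ, k) => X τ μ ^ 2 / XF ^ 2 * (a τ μ k ^ 2 / ‖a τ μ‖ ^ 2)

def bstEstimator : Fin t × Fin M × Fin n → ℝ
  | (τ, μ, k) => v k * (‖a τ μ‖ / a τ μ k) * (XF ^ 2 / X τ μ)

variable {X a XF}

theorem bstWeight_nonneg (x : Fin t × Fin M × Fin n) : 0 ≤ bstWeight X a XF x := by
  obtain ⟨τ, μ, k⟩ := x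
  unfold bstWeight
  positivity

theorem bstWeight_mul_bstEstimator {τ : Fin t} {μ : Fin M} {k : Fin n} (hX : X τ μ ≠ 0)
    (ha : a τ μ k ≠ 0) (hXF : XF ≠ 0) :
    bstWeight X a XF (τ, μ, k) * bstEstimator X a XF v (τ, μ, k)
      = v k * (X τ μ * a τ μ k / ‖a τ μ‖) := by
  have : ‖a τ μ‖ ≠ 0 := fun h => ha (by simp [norm_eq_zero.1 h])
  simp only [bstWeight, bstEstimator]
  field_simp

theorem bstWeight_mul_bstEstimator_sq {τ : Fin t} {μ : Fin M} {k : Fin n} (hX : X τ μ ≠ 0)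
    (ha : a τ μ k ≠ 0) (hXF : XF ≠ 0) :
    bstWeight X a XF (τ, μ, k) * bstEstimator X a XF v (τ, μ, k) ^ 2 = v k ^ 2 * XF ^ 2 := by
  have : ‖a τ μ‖ ≠ 0 := fun h => ha (by simp [norm_eq_zero.1 h])
  simp only [bstWeight, bstEstimator]
  field_simp

theorem sqrt_sum_sq_ne_zero {τ : Fin t} {μ : Fin M} (hX : X τ μ ≠ 0) :
    √(∑ τ, ∑ μ, X τ μ ^ 2) ≠ 0 :=
  (Real.sqrt_pos.2 <| sum_pos' (fun _ _ => sum_nonneg fun _ _ => sq_nonneg _)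
    ⟨τ, mem_univ _, sum_pos' (fun _ _ => sq_nonneg _) ⟨μ, mem_univ _, by positivity⟩⟩).ne'

theorem sum_bstWeight_mul_bstEstimator (hX : ∀ τ μ, X τ μ ≠ 0) (ha : ∀ τ μ k, a τ μ k ≠ 0)
    (hXF : XF = √(∑ τ, ∑ μ, X τ μ ^ 2)) {W : EuclideanSpace ℝ (Fin n)}
    (hW : ∀ k, W k = ∑ τ, ∑ μ, X τ μ * a τ μ k / ‖a τ μ‖) :
    ∑ x, bstWeight X a XF x * bstEstimator X a XF v x = ⟪W, v⟫ := calc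
  _ = ∑ τ, ∑ μ, ∑ k, v k * (X τ μ * a τ μ k / ‖a τ μ‖) := by
      simp only [Fintype.sum_prod_type]
      exact sum_congr rfl fun τ _ => sum_congr rfl fun μ _ => sum_congr rfl fun k _ =>
        bstWeight_mul_bstEstimator v (hX τ μ) (ha τ μ k) (hXF ▸ sqrt_sum_sq_ne_zero (hX τ μ))
  _ = ⟪W, v⟫ := by
      simp only [PiLp.inner_apply, RCLike.inner_apply, conj_trivial, hW, mul_sum]
      exact (sum_congr rfl fun τ _ => sum_comm).trans sum_comm

theorem sum_bstWeight_mul_bstEstimator_sq (hX : ∀ τ μ, X τ μ ≠ 0) (ha : ∀ τ μ k, a τ μ k ≠ 0)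
    (hXF : XF = √(∑ τ, ∑ μ, X τ μ ^ 2)) :
    ∑ x, bstWeight X a XF x * bstEstimator X a XF v x ^ 2 = t * M * ‖v‖ ^ 2 * XF ^ 2 := calc
  _ = ∑ _τ : Fin t, ∑ _μ : Fin M, ∑ k, v k ^ 2 * XF ^ 2 := by
      simp only [Fintype.sum_prod_type]
      exact sum_congr rfl fun τ _ => sum_congr rfl fun μ _ => sum_congr rfl fun k _ =>
        bstWeight_mul_bstEstimator_sq v (hX τ μ) (ha τ μ k) (hXF ▸ sqrt_sum_sq_ne_zero (hX τ μ))
  _ = t * M * ‖v‖ ^ 2 * XF ^ 2 := by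
      simp only [EuclideanSpace.norm_sq_eq, Real.norm_eq_abs, sq_abs, sum_const, card_univ,
        Fintype.card_fin, nsmul_eq_mul, ← sum_mul]
      ring

theorem measure_le_abs_average_bstEstimator_sub_le (hX : ∀ τ μ, X τ μ ≠ 0)
    (ha : ∀ τ μ k, a τ μ k ≠ 0) (hXF : XF = √(∑ τ, ∑ μ, X τ μ ^ 2)) {W : EuclideanSpace ℝ (Fin n)}
    (hW : ∀ k, W k = ∑ τ, ∑ μ, X τ μ * a τ μ k / ‖a τ μ‖) {Ω : Type*} {mΩ : MeasurableSpace Ω}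
    {P : Measure Ω} [IsProbabilityMeasure P] {N : ℕ} {V : Fin N → Ω → Fin t × Fin M × Fin n}
    (hmeas : ∀ i, Measurable (V i)) (hindep : Pairwise fun i j => IndepFun (V i) (V j) P)
    (hlaw : ∀ i x, P (V i ⁻¹' {x}) = ENNReal.ofReal (bstWeight X a XF x)) (hN : 0 < N)
    {r : ℝ} (hr : 0 < r) :
    P {ω | r ≤ |(1 / N : ℝ) * ∑ i, bstEstimator X a XF v (V i ω) - ⟪W, v⟫|}
      ≤ ENNReal.ofReal (t * M * ‖v‖ ^ 2 * XF ^ 2 / (N * r ^ 2)) := by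
  have hmoment (i : Fin N) (f : Fin t × Fin M × Fin n → ℝ) :
      ∫ ω, f (V i ω) ∂P = ∑ x, bstWeight X a XF x * f x :=
    integral_comp_eq_sum_of_measure_preimage_singleton (hmeas i) bstWeight_nonneg (hlaw i) f
  have hZ (i : Fin N) : MemLp (fun ω => bstEstimator X a XF v (V i ω)) 2 P :=
    MemLp.of_discrete.comp_of_map (g := bstEstimator X a XF v) (hmeas i).aemeasurable
  refine measure_le_abs_average_sub_le hZ
    (fun i j hij => (hindep hij).comp (φ := bstEstimator X a XF v) (ψ := bstEstimator X a XF v)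
      .of_discrete .of_discrete)
    (fun i => (hmoment i _).trans (sum_bstWeight_mul_bstEstimator v hX ha hXF hW))
    (fun i => (variance_le_expectation_sq (hZ i).1).trans_eq <|
      (hmoment i (bstEstimator X a XF v · ^ 2)).trans
        (sum_bstWeight_mul_bstEstimator_sq v hX ha hXF))
    hN hr

end BST

theorem quantum_inspired_ipe_correctness_general
    {t M n : ℕ}
    (ε γ : ℝ) (hε : 0 < ε) (hγ0 : 0 < γ)
    (X : Matrix (Fin t) (Fin M) ℝ) (hX : ∀ τ μ, X τ μ ≠ 0)
    (a : Fin t → Fin M → EuclideanSpace ℝ (Fin n)) (ha : ∀ τ μ k, a τ μ k ≠ 0)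
    (v : EuclideanSpace ℝ (Fin n))
    (W : EuclideanSpace ℝ (Fin n))
    (hW : ∀ k, W k = ∑ τ, ∑ μ, X τ μ * a τ μ k / ‖a τ μ‖)
    (XF : ℝ) (hXF : XF = Real.sqrt (∑ τ, ∑ μ, (X τ μ) ^ 2))
    (Zval : Fin t × Fin M × Fin n → ℝ)
    (hZval : ∀ τ μ k, Zval (τ, μ, k) = v k * (‖a τ μ‖ / a τ μ k) * (XF ^ 2 / X τ μ))
    (ε' : ℝ)
    (hε' : ε' = ε * max 1 |⟪W, v⟫| / (Real.sqrt (t * M) * ‖v‖ * XF))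
    (n₀ Q : ℕ) (hn₀pos : 0 < n₀)
    (hn₀ : (4 : ℝ) / ε' ^ 2 ≤ n₀) (hQ : 8 * Real.log (1 / γ) ≤ Q)
    {Ω : Type*} [MeasurableSpace Ω] (P : Measure Ω) [IsProbabilityMeasure P]
    (U : Fin Q → Fin n₀ → Ω → Fin t × Fin M × Fin n)
    (hmeas : ∀ q i, Measurable (U q i))
    (hindep : iIndepFun
      (fun qi : Fin Q × Fin n₀ => U qi.1 qi.2) P)
    (hdist : ∀ q i τ μ k, P {ω | U q i ω = (τ, μ, k)}
      = ENNReal.ofReal ((X τ μ) ^ 2 / XF ^ 2 * ((a τ μ k) ^ 2 / ‖a τ μ‖ ^ 2))) :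
    ENNReal.ofReal (1 - γ)
      ≤ P {ω | |median (fun q => (1 / n₀ : ℝ) * ∑ i, Zval (U q i ω)) - ⟪W, v⟫|
            ≤ ε * max 1 |⟪W, v⟫|} := by
  obtain rfl : Zval = bstEstimator X a XF v := funext fun ⟨τ, μ, k⟩ => hZval τ μ k
  set r := ε * max 1 |⟪W, v⟫|
  set σ2 : ℝ := t * M * ‖v‖ ^ 2 * XF ^ 2
  have hr : 0 < r := mul_pos hε (one_pos.trans_le (le_max_left _ _))
  have hn₀' : 4 * σ2 ≤ n₀ * r ^ 2 := by
    have hε'sq : ε' ^ 2 = r ^ 2 / σ2 := by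
      rw [hε', div_pow]
      congr 1
      rw [mul_pow, mul_pow, Real.sq_sqrt (by positivity)]
    rwa [hε'sq, div_div_eq_mul_div, div_le_iff₀ (by positivity)] at hn₀
  have hbad (q : Fin Q) :
      P.real {ω | r < |(1 / n₀ : ℝ) * ∑ i, bstEstimator X a XF v (U q i ω) - ⟪W, v⟫|} ≤ 1 / 4 :=
    calc _ ≤ P.real {ω | r ≤ |(1 / n₀ : ℝ) * ∑ i, bstEstimator X a XF v (U q i ω) - ⟪W, v⟫|} :=
          measureReal_mono fun _ (h : r < _) => h.le
      _ ≤ σ2 / (n₀ * r ^ 2) := ENNReal.toReal_le_of_le_ofReal (by positivity) <|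
          measure_le_abs_average_bstEstimator_sub_le v hX ha hXF hW (hmeas q)
            (fun i j hij => hindep.indepFun (i := (q, i)) (j := (q, j)) (by simpa using hij))
            (fun i ⟨τ, μ, k⟩ => hdist q i τ μ k) hn₀pos hr
      _ ≤ 1 / 4 := by
          rw [div_le_iff₀ (by positivity)]
          linarith
  exact ofReal_one_sub_le_measure_abs_median_sub_le
    ((hindep.curry hmeas).comp (fun _ u => (1 / n₀ : ℝ) * ∑ i, bstEstimator X a XF v (u i))
      fun _ => .of_discrete)
    (fun q => Measurable.of_discrete.comp (measurable_pi_lambda _ (hmeas q))) hbad hγ0 hQ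

/-- Full correctness of the quantum-inspired classical inner product estimation:
the median of `Q` independent averages, each of `n₀` independent copies of the
random variable `Z` (sampled according to the `ℓ₂`-BST distribution), estimates
`⟪W, v⟫` to error `ε·max{1, |⟪W,v⟫|}` with probability at least `1 - γ`. -/
theorem quantum_inspired_ipe_correctness
    {t M n : ℕ} (ht : 0 < t) (hM : 0 < M) (hn : 0 < n)
    (ε γ : ℝ) (hε : 0 < ε) (hγ0 : 0 < γ) (hγ1 : γ < 1)
    (X : Matrix (Fin t) (Fin M) ℝ) (hX : ∀ τ μ, X τ μ ≠ 0)
    (a : Fin t → Fin M → EuclideanSpace ℝ (Fin n)) (ha : ∀ τ μ k, a τ μ k ≠ 0)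
    (v : EuclideanSpace ℝ (Fin n)) (hv : v ≠ 0)
    (W : EuclideanSpace ℝ (Fin n))
    (hW : ∀ k, W k = ∑ τ, ∑ μ, X τ μ * a τ μ k / ‖a τ μ‖)
    (XF : ℝ) (hXF : XF = Real.sqrt (∑ τ, ∑ μ, (X τ μ) ^ 2))
    (Zval : Fin t × Fin M × Fin n → ℝ)
    (hZval : ∀ τ μ k, Zval (τ, μ, k) = v k * (‖a τ μ‖ / a τ μ k) * (XF ^ 2 / X τ μ))
    (ε' : ℝ)
    (hε' : ε' = ε * max 1 |⟪W, v⟫| / (Real.sqrt (t * M) * ‖v‖ * XF))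
    (n₀ Q : ℕ) (hn₀pos : 0 < n₀) (hQpos : 0 < Q)
    (hn₀ : (4 : ℝ) / ε' ^ 2 ≤ n₀) (hQodd : Odd Q) (hQ : 8 * Real.log (1 / γ) ≤ Q)
    {Ω : Type*} [MeasurableSpace Ω] (P : Measure Ω) [IsProbabilityMeasure P]
    (U : Fin Q → Fin n₀ → Ω → Fin t × Fin M × Fin n)
    (hmeas : ∀ q i, Measurable (U q i))
    (hindep : iIndepFun
      (fun qi : Fin Q × Fin n₀ => U qi.1 qi.2) P)
    (hdist : ∀ q i τ μ k, P {ω | U q i ω = (τ, μ, k)}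
      = ENNReal.ofReal ((X τ μ) ^ 2 / XF ^ 2 * ((a τ μ k) ^ 2 / ‖a τ μ‖ ^ 2))) :
    ENNReal.ofReal (1 - γ)
      ≤ P {ω | |median (fun q => (1 / n₀ : ℝ) * ∑ i, Zval (U q i ω)) - ⟪W, v⟫|
            ≤ ε * max 1 |⟪W, v⟫|} :=
  quantum_inspired_ipe_correctness_general ε γ hε hγ0 X hX a ha v W hW XF hXF Zval hZval ε' hε' n₀ Q
    hn₀pos hn₀ hQ P U hmeas hindep hdist
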